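/- arXiv:1904.08339 — 2 statements merged into one kernel-verified Lean document; each statement's English description precedes it below -/
import Mathlib

section
/- Let (a_i, b_i, δ_i, σ_i) be generated by the mex rule: δ_{i+1} = mex({δ_1,…,δ_i} ∪ {σ_1,…,σ_i}), a_{i+1} = mex({a_1,…,a_i} ∪ {b_1,…,b_i}), b_{i+1} = a_{i+1} + δ_{i+1}, σ_{i+1} = a_{i+1} + b_{i+1} (using mex over positive integers). Then the sequences a and b are strictly increasing and complementary (their value sets partition the positive integers), and likewise the sequences δ and σ are complementary. -/
/-- mex over the positive integers: the least positive integer not in `S`. -/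
noncomputable def mexP (S : Set ℕ) : ℕ := sInf {n | 0 < n ∧ n ∉ S}

/-- One step of the mex rule: given the history of previous tuples
(a_1,b_1,δ_1,σ_1),…,(a_i,b_i,δ_i,σ_i), produce (a_{i+1},b_{i+1},δ_{i+1},σ_{i+1})
where δ_{i+1} = mex(Δ_i ∪ Σ_i), a_{i+1} = mex(A_i ∪ B_i), b_{i+1} = a_{i+1} + δ_{i+1},
σ_{i+1} = a_{i+1} + b_{i+1}. -/
noncomputable def step (h : List (ℕ × ℕ × ℕ × ℕ)) : ℕ × ℕ × ℕ × ℕ :=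
  let δ := mexP {m | ∃ t ∈ h, t.2.2.1 = m ∨ t.2.2.2 = m}
  let a := mexP {m | ∃ t ∈ h, t.1 = m ∨ t.2.1 = m}
  (a, a + δ, δ, a + (a + δ))

/-- The history of the first i tuples generated by the mex rule. -/
noncomputable def hist : ℕ → List (ℕ × ℕ × ℕ × ℕ)
  | 0 => []
  | i + 1 => hist i ++ [step (hist i)]

/-- a_i, b_i, δ_i, σ_i for i ≥ 1. -/
noncomputable def aSeq (i : ℕ) : ℕ := (step (hist (i - 1))).1
noncomputable def bSeq (i : ℕ) : ℕ := (step (hist (i - 1))).2.1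
noncomputable def dSeq (i : ℕ) : ℕ := (step (hist (i - 1))).2.2.1
noncomputable def sSeq (i : ℕ) : ℕ := (step (hist (i - 1))).2.2.2

/-!
Both pairs are instances of one pattern: `x i` is the mex of all values `x k, y k` with `k < i`,
and `y i > x i`. Then `x` is strictly increasing, since the mex of a growing set can only move up
once its old value has been used. A value `y j` is missed by every later `x i` (mex avoids it)
and by every earlier `x i ≤ x j < y j`, so the two ranges are disjoint. Finally `m` must occur
among the first `m` terms, for otherwise `x (m + 1) ≤ m`, contradicting `i ≤ x i`.
For the mex rule, `b = a + δ` with `δ > 0`, and `σ = 2a + δ` with `a > 0`.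
-/

section Mex

variable {S T : Set ℕ}

theorem mexP_mem_of_finite (hS : S.Finite) : mexP S ∈ {n | 0 < n ∧ n ∉ S} :=
  Nat.sInf_mem ((Set.Ioi_infinite 0).sdiff hS).nonempty

theorem mexP_pos (hS : S.Finite) : 0 < mexP S := (mexP_mem_of_finite hS).1

theorem mexP_notMem (hS : S.Finite) : mexP S ∉ S := (mexP_mem_of_finite hS).2

theorem mexP_le_of_notMem {m : ℕ} (hm : 0 < m) (hmS : m ∉ S) : mexP S ≤ m :=
  Nat.sInf_le ⟨hm, hmS⟩

theorem mexP_lt_mexP (hT : T.Finite) (hST : S ⊆ T) (hmem : mexP S ∈ T) :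
    mexP S < mexP T :=
  (mexP_le_of_notMem (mexP_pos hT) fun h => mexP_notMem hT (hST h)).lt_of_ne
    fun h => mexP_notMem hT (h ▸ hmem)

end Mex

def prefixValues (x y : ℕ → ℕ) (n : ℕ) : Set ℕ :=
  {m | ∃ k, 1 ≤ k ∧ k ≤ n ∧ (x k = m ∨ y k = m)}

namespace prefixValues

variable {x y : ℕ → ℕ}

theorem finite (n : ℕ) : (prefixValues x y n).Finite := by
  refine (((Set.finite_Icc 1 n).image x).union ((Set.finite_Icc 1 n).image y)).subset ?_
  rintro m ⟨k, hk1, hkn, hx | hy⟩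
  · exact Or.inl ⟨k, ⟨hk1, hkn⟩, hx⟩
  · exact Or.inr ⟨k, ⟨hk1, hkn⟩, hy⟩

theorem mono {n n' : ℕ} (h : n ≤ n') : prefixValues x y n ⊆ prefixValues x y n' := by
  rintro m ⟨k, hk1, hkn, hm⟩
  exact ⟨k, hk1, hkn.trans h, hm⟩

theorem left_mem {k n : ℕ} (hk : 1 ≤ k) (hkn : k ≤ n) : x k ∈ prefixValues x y n :=
  ⟨k, hk, hkn, Or.inl rfl⟩

theorem right_mem {k n : ℕ} (hk : 1 ≤ k) (hkn : k ≤ n) : y k ∈ prefixValues x y n :=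
  ⟨k, hk, hkn, Or.inr rfl⟩

end prefixValues

structure IsMexPair (x y : ℕ → ℕ) : Prop where
  eq_mexP : ∀ i, 1 ≤ i → x i = mexP (prefixValues x y (i - 1))
  lt : ∀ i, 1 ≤ i → x i < y i

namespace IsMexPair

variable {x y : ℕ → ℕ}

theorem pos (hxy : IsMexPair x y) {i : ℕ} (hi : 1 ≤ i) : 0 < x i :=
  hxy.eq_mexP i hi ▸ mexP_pos (prefixValues.finite _)

theorem notMem (hxy : IsMexPair x y) {i : ℕ} (hi : 1 ≤ i) :
    x i ∉ prefixValues x y (i - 1) :=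
  hxy.eq_mexP i hi ▸ mexP_notMem (prefixValues.finite _)

theorem strictMonoOn (hxy : IsMexPair x y) : StrictMonoOn x {i | 1 ≤ i} := by
  intro i (hi : 1 ≤ i) j (hj : 1 ≤ j) hij
  rw [hxy.eq_mexP i hi, hxy.eq_mexP j hj]
  refine mexP_lt_mexP (prefixValues.finite _) (prefixValues.mono (by omega)) ?_
  exact hxy.eq_mexP i hi ▸ prefixValues.left_mem hi (by omega)

theorem le_self (hxy : IsMexPair x y) {i : ℕ} (hi : 1 ≤ i) : i ≤ x i := by
  induction i, hi using Nat.le_induction with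
  | base => exact hxy.pos le_rfl
  | succ i hi ih => exact ih.trans_lt (hxy.strictMonoOn hi (by simp) (by omega))

theorem union_eq (hxy : IsMexPair x y) :
    {m | ∃ i, 1 ≤ i ∧ x i = m} ∪ {m | ∃ i, 1 ≤ i ∧ y i = m} = {m | 0 < m} := by
  ext m
  constructor
  · rintro (⟨i, hi, rfl⟩ | ⟨i, hi, rfl⟩)
    · exact hxy.pos hi
    · exact (hxy.pos hi).trans (hxy.lt i hi)
  · intro (hm : 0 < m)
    have hmem : m ∈ prefixValues x y m := by
      by_contra hnot
      have hle : x (m + 1) ≤ m := hxy.eq_mexP (m + 1) (by omega) ▸ mexP_le_of_notMem hm hnot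
      have := hxy.le_self (i := m + 1) (by omega)
      omega
    obtain ⟨k, hk, -, hx | hy⟩ := hmem
    · exact Or.inl ⟨k, hk, hx⟩
    · exact Or.inr ⟨k, hk, hy⟩

theorem disjoint (hxy : IsMexPair x y) :
    Disjoint {m | ∃ i, 1 ≤ i ∧ x i = m} {m | ∃ i, 1 ≤ i ∧ y i = m} := by
  rw [Set.disjoint_left]
  rintro _ ⟨i, hi, rfl⟩ ⟨j, hj, hyx⟩
  rcases le_or_gt i j with hij | hji
  · have : x i ≤ x j := hxy.strictMonoOn.monotoneOn hi hj hij
    have := hxy.lt j hj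
    omega
  · exact hxy.notMem hi (hyx ▸ prefixValues.right_mem hj (by omega))

end IsMexPair

theorem mem_hist_iff {t : ℕ × ℕ × ℕ × ℕ} {n : ℕ} :
    t ∈ hist n ↔ ∃ k, 1 ≤ k ∧ k ≤ n ∧ step (hist (k - 1)) = t := by
  induction n with
  | zero => simp [hist]
  | succ n ih =>
    simp only [hist, List.mem_append, ih, List.mem_singleton]
    constructor
    · rintro (⟨k, hk, hkn, rfl⟩ | rfl)
      · exact ⟨k, hk, by omega, rfl⟩
      · exact ⟨n + 1, by omega, le_rfl, rfl⟩
    · rintro ⟨k, hk, hkn, rfl⟩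
      rcases hkn.lt_or_eq with hkn | rfl
      · exact Or.inl ⟨k, hk, by omega, rfl⟩
      · exact Or.inr rfl

theorem setOf_mem_hist (f g : ℕ × ℕ × ℕ × ℕ → ℕ) (n : ℕ) :
    {m | ∃ t ∈ hist n, f t = m ∨ g t = m} =
      prefixValues (fun k => f (step (hist (k - 1)))) (fun k => g (step (hist (k - 1)))) n := by
  ext m
  constructor
  · rintro ⟨t, ht, hm⟩
    obtain ⟨k, hk, hkn, rfl⟩ := mem_hist_iff.1 ht
    exact ⟨k, hk, hkn, hm⟩
  · rintro ⟨k, hk, hkn, hm⟩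
    exact ⟨_, mem_hist_iff.2 ⟨k, hk, hkn, rfl⟩, hm⟩

theorem aSeq_eq_mexP (i : ℕ) : aSeq i = mexP (prefixValues aSeq bSeq (i - 1)) :=
  congrArg mexP (setOf_mem_hist Prod.fst (·.2.1) (i - 1))

theorem dSeq_eq_mexP (i : ℕ) : dSeq i = mexP (prefixValues dSeq sSeq (i - 1)) :=
  congrArg mexP (setOf_mem_hist (·.2.2.1) (·.2.2.2) (i - 1))

theorem dSeq_pos (i : ℕ) : 0 < dSeq i :=
  dSeq_eq_mexP i ▸ mexP_pos (prefixValues.finite _)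

theorem isMexPair_aSeq_bSeq : IsMexPair aSeq bSeq :=
  ⟨fun i _ => aSeq_eq_mexP i, fun i _ => Nat.lt_add_of_pos_right (dSeq_pos i)⟩

theorem isMexPair_dSeq_sSeq : IsMexPair dSeq sSeq := by
  refine ⟨fun i _ => dSeq_eq_mexP i, fun i hi => ?_⟩
  have := isMexPair_aSeq_bSeq.pos hi
  change dSeq i < aSeq i + (aSeq i + dSeq i)
  omega

/-- The mex-rule sequences a and b are strictly increasing and complementary,
and likewise δ and σ are complementary. -/
theorem mex_rule_complementary :
    StrictMonoOn aSeq {i | 1 ≤ i} ∧ StrictMonoOn bSeq {i | 1 ≤ i} ∧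
    ({m | ∃ i, 1 ≤ i ∧ aSeq i = m} ∪ {m | ∃ i, 1 ≤ i ∧ bSeq i = m} = {m : ℕ | 0 < m}) ∧
    Disjoint {m | ∃ i, 1 ≤ i ∧ aSeq i = m} {m | ∃ i, 1 ≤ i ∧ bSeq i = m} ∧
    ({m | ∃ i, 1 ≤ i ∧ dSeq i = m} ∪ {m | ∃ i, 1 ≤ i ∧ sSeq i = m} = {m : ℕ | 0 < m}) ∧
    Disjoint {m | ∃ i, 1 ≤ i ∧ dSeq i = m} {m | ∃ i, 1 ≤ i ∧ sSeq i = m} := by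
  have hab := isMexPair_aSeq_bSeq
  have hds := isMexPair_dSeq_sSeq
  have hb : StrictMonoOn bSeq {i | 1 ≤ i} := fun i hi j hj hij =>
    Nat.add_lt_add (hab.strictMonoOn hi hj hij) (hds.strictMonoOn hi hj hij)
  exact ⟨hab.strictMonoOn, hb, hab.union_eq, hab.disjoint, hds.union_eq, hds.disjoint⟩
end

section
/- Let ν be the infinite 0-1 word obtained from the Tribonacci word (fixed point of 0↦01, 1↦02, 2↦0) by deleting all occurrences of the letter 2. Then ν equals the image of the Tribonacci word under the coding λ: 0↦0, 1↦1, 2↦ε, and the positions of 0's in ν are exactly the values of Δ^0 = X^1 − X^0 while the positions of 1's are the values of Δ^1 = X^2 − X^1, where X^j is the position sequence of letter j in the Tribonacci word. -/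
/-- The Tribonacci substitution 0 ↦ 01, 1 ↦ 02, 2 ↦ 0, applied letterwise. -/
def tribSub (w : List ℕ) : List ℕ :=
  w.flatMap (fun j => if j + 1 < 3 then [0, j + 1] else [0])

/-- The Tribonacci word (0-indexed). -/
def trib (n : ℕ) : ℕ := (tribSub^[n + 1] [0]).getD n 0

/-- The coding λ: 0 ↦ 0, 1 ↦ 1, 2 ↦ ε, applied letterwise. -/
def lam (w : List ℕ) : List ℕ := w.flatMap (fun j => if j = 2 then [] else [j])

/-- ν (0-indexed): the infinite word obtained from the Tribonacci word by deleting
all occurrences of the letter 2 (computed on a sufficiently long prefix). -/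
def nu (n : ℕ) : ℕ := ((tribSub^[n + 2] [0]).filter (fun x => decide (x ≠ 2))).getD n 0

/-- X^j_n: the 1-based position of the n-th (1-based) occurrence of letter j
in the Tribonacci word. -/
noncomputable def Xpos (j n : ℕ) : ℕ := Nat.nth (fun m => trib m = j) (n - 1) + 1

/-- Δ^j_n = X^{j+1}_n − X^j_n. -/
noncomputable def Δrow (j n : ℕ) : ℕ := Xpos (j + 1) n - Xpos j n

/-!
Since `ω = θ(ω)`, the substitution maps the prefix of `ω` of length `n` onto the prefix of
length `n + |ω₀⋯ωₙ₋₁|₀ + |ω₀⋯ωₙ₋₁|₁`. Hence if `ω_p = j ∈ {0, 1}`, the block `θ(j) = 0 (j+1)`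
sits at position `p' = p + |ω₀⋯ω_{p-1}|₀ + |ω₀⋯ω_{p-1}|₁`, and counting letters shows that the
`j+1` at `p' + 1` is the occurrence of `j+1` with the same index as the `j` at `p`. Therefore
`Δ^j_n = X^{j+1}_n − X^j_n` is one more than the number of non-`2` letters before `X^j_n`, which is
exactly the position in `ν` of the letter `j` found at `X^j_n`.
-/

section RangeMap

variable {α : Type*} (f : ℕ → α)

lemma List.count_map_range [DecidableEq α] (a : α) (n : ℕ) :
    ((List.range n).map f).count a = Nat.count (fun i => f i = a) n := by
  induction n with
  | zero => simp
  | succ n ih =>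
    rw [List.range_succ, List.map_append, List.count_append, ih, Nat.count_succ]
    simp [List.count_singleton]

lemma List.eq_map_range_of_prefix {u : List α} {n : ℕ} (h : u <+: (List.range n).map f) :
    u = (List.range u.length).map f := by
  rw [List.prefix_iff_eq_take.mp h, ← List.map_take, List.take_range]
  simp

lemma List.filter_map_range (P : α → Prop) [DecidablePred P] (n : ℕ) :
    ((List.range n).map f).filter (fun x => decide (P x)) =
      (List.range (Nat.count (fun i => P (f i)) n)).map
        (fun k => f (Nat.nth (fun i => P (f i)) k)) := by
  induction n with
  | zero => simp
  | succ n ih =>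
    rw [List.range_succ, List.map_append, List.filter_append, ih, Nat.count_succ]
    by_cases h : P (f n)
    · rw [if_pos h, List.range_succ, List.map_append]
      simp [h, Nat.nth_count (p := fun i => P (f i)) h]
    · simp [h]

end RangeMap

namespace Tribonacci

lemma tribSub_append (u v : List ℕ) : tribSub (u ++ v) = tribSub u ++ tribSub v :=
  List.flatMap_append

lemma tribSub_cons (a : ℕ) (w : List ℕ) :
    tribSub (a :: w) = (if a + 1 < 3 then [0, a + 1] else [0]) ++ tribSub w :=
  List.flatMap_cons

lemma tribSub_prefix_tribSub {u v : List ℕ} (h : u <+: v) : tribSub u <+: tribSub v := by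
  obtain ⟨t, rfl⟩ := h
  exact ⟨tribSub t, (tribSub_append u t).symm⟩

lemma length_tribSub (w : List ℕ) :
    (tribSub w).length = w.length + w.count 0 + w.count 1 := by
  induction w with
  | nil => rfl
  | cons a w ih =>
    rw [tribSub_cons]
    split <;> simp [List.count_cons, ih] <;> split_ifs <;> omega

lemma count_zero_tribSub (w : List ℕ) : (tribSub w).count 0 = w.length := by
  induction w with
  | nil => rfl
  | cons a w ih =>
    rw [tribSub_cons]
    split <;> simp [ih]

lemma count_succ_tribSub {j : ℕ} (hj : j ≤ 1) (w : List ℕ) :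
    (tribSub w).count (j + 1) = w.count j := by
  induction w with
  | nil => rfl
  | cons a w ih =>
    rw [tribSub_cons]
    split <;> simp [List.count_cons, ih]
    omega

lemma lt_three_of_mem_tribSub {w : List ℕ} {x : ℕ} (hx : x ∈ tribSub w) : x < 3 := by
  obtain ⟨a, -, hxa⟩ := List.mem_flatMap.mp hx
  split at hxa <;> simp at hxa <;> omega

lemma iterate_prefix_iterate_succ (k : ℕ) : tribSub^[k] [0] <+: tribSub^[k + 1] [0] := by
  induction k with
  | zero => exact ⟨[1], rfl⟩
  | succ k ih =>
    rw [Function.iterate_succ_apply', Function.iterate_succ_apply' _ (k + 1)]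
    exact tribSub_prefix_tribSub ih

lemma iterate_prefix_iterate {k l : ℕ} (h : k ≤ l) : tribSub^[k] [0] <+: tribSub^[l] [0] := by
  induction l, h using Nat.le_induction with
  | base => exact List.prefix_refl _
  | succ l _ ih => exact ih.trans (iterate_prefix_iterate_succ l)

lemma lt_length_iterate (k : ℕ) : k < (tribSub^[k] [0]).length := by
  induction k with
  | zero => exact Nat.zero_lt_one
  | succ k ih =>
    have hzero : 0 < (tribSub^[k] [0]).count 0 :=
      List.count_pos_iff.mpr ((iterate_prefix_iterate k.zero_le).subset (by simp))
    rw [Function.iterate_succ_apply', length_tribSub]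
    omega

def tribPrefix (n : ℕ) : List ℕ := (List.range n).map trib

@[simp]
lemma length_tribPrefix (n : ℕ) : (tribPrefix n).length = n := by
  simp [tribPrefix]

lemma tribPrefix_succ (n : ℕ) : tribPrefix (n + 1) = tribPrefix n ++ [trib n] := by
  simp [tribPrefix, List.range_succ]

lemma iterate_eq_tribPrefix (k : ℕ) : tribSub^[k] [0] = tribPrefix (tribSub^[k] [0]).length := by
  refine List.ext_getElem (by simp [tribPrefix]) fun i hk _ => ?_
  have hi : i < (tribSub^[i + 1] [0]).length := (lt_length_iterate (i + 1)).trans' i.lt_succ_self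
  have htrib : trib i = (tribSub^[i + 1] [0])[i] := List.getD_eq_getElem _ _ hi
  simp only [tribPrefix, List.getElem_map, List.getElem_range, htrib]
  rcases le_total k (i + 1) with h | h
  · exact (iterate_prefix_iterate h).getElem hk
  · exact ((iterate_prefix_iterate h).getElem hi).symm

lemma trib_lt_three (n : ℕ) : trib n < 3 := by
  have hn : n < (tribSub^[n + 1] [0]).length := (lt_length_iterate (n + 1)).trans' n.lt_succ_self
  rw [trib, List.getD_eq_getElem _ _ hn]
  refine lt_three_of_mem_tribSub (w := tribSub^[n] [0]) ?_
  rw [← Function.iterate_succ_apply' tribSub n]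
  exact List.getElem_mem hn

lemma tribPrefix_prefix_tribPrefix {m n : ℕ} (h : m ≤ n) : tribPrefix m <+: tribPrefix n := by
  obtain ⟨k, rfl⟩ := Nat.exists_eq_add_of_le h
  rw [tribPrefix, tribPrefix, List.range_add, List.map_append]
  exact List.prefix_append _ _

def tribCount (j n : ℕ) : ℕ := Nat.count (fun m => trib m = j) n

lemma count_tribPrefix (j n : ℕ) : (tribPrefix n).count j = tribCount j n :=
  List.count_map_range trib j n

def tribSubLength (n : ℕ) : ℕ := n + tribCount 0 n + tribCount 1 n

lemma le_tribSubLength (n : ℕ) : n ≤ tribSubLength n := by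
  unfold tribSubLength; omega

lemma tribSub_tribPrefix (n : ℕ) : tribSub (tribPrefix n) = tribPrefix (tribSubLength n) := by
  have hn : tribPrefix n <+: tribSub^[n] [0] := by
    rw [iterate_eq_tribPrefix n]
    exact tribPrefix_prefix_tribPrefix (lt_length_iterate n).le
  have himage : tribSub (tribPrefix n) <+: tribPrefix (tribSub^[n + 1] [0]).length := by
    rw [← iterate_eq_tribPrefix, Function.iterate_succ_apply']
    exact tribSub_prefix_tribSub hn
  rw [List.eq_map_range_of_prefix trib himage, length_tribSub, count_tribPrefix,
    count_tribPrefix, tribPrefix, List.length_map, List.length_range]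
  rfl

lemma tribCount_succ_tribSubLength {j : ℕ} (hj : j ≤ 1) (n : ℕ) :
    tribCount (j + 1) (tribSubLength n) = tribCount j n := by
  rw [← count_tribPrefix, ← tribSub_tribPrefix, count_succ_tribSub hj, count_tribPrefix]

lemma trib_tribSubLength_add {n i a : ℕ} (h : (tribSub [trib n])[i]? = some a) :
    trib (tribSubLength n + i) = a := by
  have hblock : tribPrefix (tribSubLength (n + 1)) =
      tribPrefix (tribSubLength n) ++ tribSub [trib n] := by
    rw [← tribSub_tribPrefix, ← tribSub_tribPrefix, tribPrefix_succ, tribSub_append]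
  have hi : tribSubLength n + i < tribSubLength (n + 1) := by
    have hlen : tribSubLength (n + 1) = tribSubLength n + (tribSub [trib n]).length := by
      simpa using congrArg List.length hblock
    have := (List.getElem?_eq_some_iff.mp h).1
    omega
  have := congrArg (·[tribSubLength n + i]?) hblock
  rw [List.getElem?_append_right (by simp), length_tribPrefix, Nat.add_sub_cancel_left, h,
    tribPrefix, List.getElem?_map, List.getElem?_range hi] at this
  exact Option.some_injective _ this

lemma trib_tribSubLength (n : ℕ) : trib (tribSubLength n) = 0 :=
  trib_tribSubLength_add (i := 0) (by simp only [tribSub, List.flatMap_singleton]; split <;> rfl)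

lemma trib_tribSubLength_add_one {n : ℕ} (h : trib n ≤ 1) :
    trib (tribSubLength n + 1) = trib n + 1 :=
  trib_tribSubLength_add (by simp [tribSub, show trib n + 1 < 3 by omega])

lemma nth_trib_eq_succ {j p : ℕ} (hj : j ≤ 1) (hp : trib p = j) :
    Nat.nth (trib · = j + 1) (tribCount j p) = tribSubLength p + 1 := by
  have hletter : trib (tribSubLength p + 1) = j + 1 := hp ▸ trib_tribSubLength_add_one (hp ▸ hj)
  have hcount : tribCount (j + 1) (tribSubLength p + 1) = tribCount j p := by
    rw [tribCount, Nat.count_succ, if_neg (by rw [trib_tribSubLength]; omega)]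
    exact tribCount_succ_tribSubLength hj p
  rw [← hcount]
  exact Nat.nth_count hletter

lemma infinite_setOf_trib_eq {j : ℕ} (hj : j ≤ 2) : {p | trib p = j}.Infinite := by
  induction j with
  | zero =>
    refine Set.infinite_of_forall_exists_gt fun a =>
      ⟨tribSubLength (a + 1), trib_tribSubLength _, ?_⟩
    have := le_tribSubLength (a + 1)
    omega
  | succ j ih =>
    refine Set.infinite_of_forall_exists_gt fun a => ?_
    obtain ⟨p, hp, hap⟩ := (ih (by omega)).exists_gt a
    refine ⟨tribSubLength p + 1, ?_, ?_⟩
    · rw [Set.mem_ofPred_eq] at hp ⊢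
      rw [trib_tribSubLength_add_one (by omega), hp]
    · have := le_tribSubLength p
      omega

lemma count_trib_ne_two (n : ℕ) :
    Nat.count (trib · ≠ 2) n = tribCount 0 n + tribCount 1 n := by
  induction n with
  | zero => rfl
  | succ n ih =>
    simp only [tribCount, Nat.count_succ] at ih ⊢
    have := trib_lt_three n
    interval_cases trib n <;> simp [ih] <;> omega

lemma Δrow_eq {j : ℕ} (hj : j ≤ 1) (n : ℕ) :
    Δrow j n = Nat.count (trib · ≠ 2) (Nat.nth (trib · = j) (n - 1)) + 1 := by
  have hinf := infinite_setOf_trib_eq (j := j) (by omega)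
  set p := Nat.nth (trib · = j) (n - 1)
  have hcount : tribCount j p = n - 1 := Nat.count_nth_of_infinite hinf _
  have hnext : Nat.nth (trib · = j + 1) (n - 1) = tribSubLength p + 1 :=
    hcount ▸ nth_trib_eq_succ hj (Nat.nth_mem_of_infinite hinf _)
  rw [Δrow, Xpos, Xpos, hnext, count_trib_ne_two, tribSubLength]
  omega

lemma nu_eq (m : ℕ) : nu m = trib (Nat.nth (trib · ≠ 2) m) := by
  have hm : m < Nat.count (trib · ≠ 2) (tribSub^[m + 2] [0]).length := by
    rw [count_trib_ne_two, ← count_tribPrefix, ← iterate_eq_tribPrefix,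
      Function.iterate_succ_apply', count_zero_tribSub]
    have := lt_length_iterate (m + 1)
    omega
  rw [nu, iterate_eq_tribPrefix, tribPrefix, List.filter_map_range,
    List.getD_eq_getElem _ _ (by simpa using hm)]
  simp

lemma nu_eq_iff_exists_Δrow {j m : ℕ} (hj : j ≤ 1) (hm : 0 < m) :
    nu (m - 1) = j ↔ ∃ n, 1 ≤ n ∧ Δrow j n = m := by
  have hinf_ne_two : {p | trib p ≠ 2}.Infinite :=
    (infinite_setOf_trib_eq (j := 0) (by omega)).mono fun p hp => by simp_all
  have hinf := infinite_setOf_trib_eq (j := j) (by omega)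
  rw [nu_eq]
  constructor
  · intro h
    refine ⟨tribCount j (Nat.nth (trib · ≠ 2) (m - 1)) + 1, by omega, ?_⟩
    rw [Δrow_eq hj, Nat.add_sub_cancel, tribCount, Nat.nth_count (p := (trib · = j)) h,
      Nat.count_nth_of_infinite hinf_ne_two]
    omega
  · rintro ⟨n, -, rfl⟩
    have hp : trib (Nat.nth (trib · = j) (n - 1)) = j := Nat.nth_mem_of_infinite hinf _
    rw [Δrow_eq hj, Nat.add_sub_cancel, Nat.nth_count (p := (trib · ≠ 2)) (by omega), hp]

lemma lam_eq_filter (w : List ℕ) : lam w = w.filter (fun x => decide (x ≠ 2)) := by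
  induction w with
  | nil => rfl
  | cons a w ih =>
    by_cases h : a = 2 <;> simp [lam, h] at ih ⊢ <;> exact ih

end Tribonacci

open Tribonacci in
/-- ν equals the image of the Tribonacci word under λ, and the (1-based) positions of
0's in ν are exactly the values of Δ^0 = X^1 − X^0, while the positions of 1's in ν
are exactly the values of Δ^1 = X^2 − X^1. -/
theorem nu_coding_and_positions :
    (∀ n, nu n = (lam (tribSub^[n + 2] [0])).getD n 0) ∧
    (∀ m, 0 < m →
      (nu (m - 1) = 0 ↔ ∃ n, 1 ≤ n ∧ Δrow 0 n = m) ∧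
      (nu (m - 1) = 1 ↔ ∃ n, 1 ≤ n ∧ Δrow 1 n = m)) :=
  ⟨fun n => by rw [lam_eq_filter]; rfl,
    fun _ hm => ⟨nu_eq_iff_exists_Δrow zero_le_one hm, nu_eq_iff_exists_Δrow le_rfl hm⟩⟩
end
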